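/- Let Ω ⊆ ℝ³ be open and let χ, π : Ω → ℝ be smooth. Then the vector field w = ∇χ × ∇π satisfies, at every point of Ω, the identity w × curl w = (div[∇π × (∇χ × ∇π)])·∇χ + (div[∇χ × (∇π × ∇χ)])·∇π. -/

import Mathlib

noncomputable section

/-- Points of `ℝ³`. -/
abbrev V3 : Type := Fin 3 → ℝ

/-- Standard basis vector. -/
def ee (i : Fin 3) : V3 := fun j => if j = i then 1 else 0

/-- Partial derivative in the `i`-th coordinate direction. -/
def pd (i : Fin 3) (f : V3 → ℝ) (x : V3) : ℝ := fderiv ℝ f x (ee i)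

/-- Gradient of a scalar field. -/
def grad (f : V3 → ℝ) (x : V3) : V3 := fun i => pd i f x

/-- Divergence of a vector field. -/
def vdiv (w : V3 → V3) (x : V3) : ℝ :=
  pd 0 (fun y => w y 0) x + pd 1 (fun y => w y 1) x + pd 2 (fun y => w y 2) x

/-- Curl of a vector field. -/
def vcurl (w : V3 → V3) (x : V3) : V3 :=
  ![pd 1 (fun y => w y 2) x - pd 2 (fun y => w y 1) x,
    pd 2 (fun y => w y 0) x - pd 0 (fun y => w y 2) x,
    pd 0 (fun y => w y 1) x - pd 1 (fun y => w y 0) x]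

/-- Euclidean dot product on `ℝ³`. -/
def dot3 (a b : V3) : ℝ := a 0 * b 0 + a 1 * b 1 + a 2 * b 2

/-- Cross product on `ℝ³`. -/
def cross3 (a b : V3) : V3 :=
  ![a 1 * b 2 - a 2 * b 1, a 2 * b 0 - a 0 * b 2, a 0 * b 1 - a 1 * b 0]

/-- Euclidean norm on `ℝ³`. -/
def norm3 (a : V3) : ℝ := Real.sqrt (dot3 a a)

/-- Laplacian of a scalar field. -/
def lap (f : V3 → ℝ) (x : V3) : ℝ := vdiv (grad f) x

/-- A smooth orthogonal coordinate system on `Ω`: three smooth scalar functions whose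
gradients are nonvanishing and pairwise orthogonal at every point of `Ω`. -/
def OrthoSystem (Ω : Set V3) (f g h : V3 → ℝ) : Prop :=
  ContDiffOn ℝ (⊤ : ℕ∞) f Ω ∧ ContDiffOn ℝ (⊤ : ℕ∞) g Ω ∧ ContDiffOn ℝ (⊤ : ℕ∞) h Ω ∧
    ∀ x ∈ Ω, grad f x ≠ 0 ∧ grad g x ≠ 0 ∧ grad h x ≠ 0 ∧
      dot3 (grad f x) (grad g x) = 0 ∧ dot3 (grad f x) (grad h x) = 0 ∧
      dot3 (grad g x) (grad h x) = 0

lemma pd_contDiffAt {f : V3 → ℝ} {x : V3} (hf : ContDiffAt ℝ (⊤ : ℕ∞) f x) (j : Fin 3) :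
    ContDiffAt ℝ (⊤ : ℕ∞) (pd j f) x := by
  have h := hf.fderiv_right (m := (⊤ : ℕ∞)) (by simp)
  exact (ContinuousLinearMap.apply ℝ ℝ (ee j)).contDiff.contDiffAt.comp x h

lemma pd_sub {f g : V3 → ℝ} {x : V3} (i : Fin 3) (hf : DifferentiableAt ℝ f x)
    (hg : DifferentiableAt ℝ g x) :
    pd i (fun y => f y - g y) x = pd i f x - pd i g x := by
  unfold pd; rw [fderiv_fun_sub hf hg]; simp

lemma pd_mul {f g : V3 → ℝ} {x : V3} (i : Fin 3) (hf : DifferentiableAt ℝ f x)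
    (hg : DifferentiableAt ℝ g x) :
    pd i (fun y => f y * g y) x = pd i f x * g x + f x * pd i g x := by
  unfold pd; rw [fderiv_fun_mul hf hg]; simp; ring

lemma pd_pd {f : V3 → ℝ} {x : V3} (hf : ContDiffAt ℝ (⊤ : ℕ∞) f x) (i j : Fin 3) :
    pd i (pd j f) x = fderiv ℝ (fderiv ℝ f) x (ee i) (ee j) := by
  have hd : DifferentiableAt ℝ (fderiv ℝ f) x :=
    (hf.fderiv_right (m := (⊤ : ℕ∞)) (by simp)).differentiableAt (by simp)
  show fderiv ℝ (fun y => (fderiv ℝ f y) (ee j)) x (ee i) = _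
  rw [fderiv_clm_apply hd (differentiableAt_const _)]
  simp

lemma pd_comm {f : V3 → ℝ} {x : V3} (hf : ContDiffAt ℝ (⊤ : ℕ∞) f x) (i j : Fin 3) :
    pd i (pd j f) x = pd j (pd i f) x := by
  rw [pd_pd hf, pd_pd hf]
  exact hf.isSymmSndFDerivAt (by simp only [minSmoothness_of_isRCLikeNormedField]; exact WithTop.coe_le_coe.mpr le_top) (ee i) (ee j)

lemma pdq {x : V3} {f g u v : V3 → ℝ} (i : Fin 3) (hf : DifferentiableAt ℝ f x)
    (hg : DifferentiableAt ℝ g x) (hu : DifferentiableAt ℝ u x) (hv : DifferentiableAt ℝ v x) :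
    pd i (fun y => f y * g y - u y * v y) x
      = pd i f x * g x + f x * pd i g x - (pd i u x * v x + u x * pd i v x) := by
  rw [pd_sub i (hf.fun_mul hg) (hu.fun_mul hv), pd_mul i hf hg, pd_mul i hu hv]

lemma pdc {x : V3} {f p q r s g p' q' r' s' : V3 → ℝ} (i : Fin 3)
    (hf : DifferentiableAt ℝ f x) (hp : DifferentiableAt ℝ p x) (hq : DifferentiableAt ℝ q x)
    (hr : DifferentiableAt ℝ r x) (hs : DifferentiableAt ℝ s x)
    (hg : DifferentiableAt ℝ g x) (hp' : DifferentiableAt ℝ p' x) (hq' : DifferentiableAt ℝ q' x)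
    (hr' : DifferentiableAt ℝ r' x) (hs' : DifferentiableAt ℝ s' x) :
    pd i (fun y => f y * (p y * q y - r y * s y) - g y * (p' y * q' y - r' y * s' y)) x
      = pd i f x * (p x * q x - r x * s x)
        + f x * (pd i p x * q x + p x * pd i q x - (pd i r x * s x + r x * pd i s x))
        - (pd i g x * (p' x * q' x - r' x * s' x)
          + g x * (pd i p' x * q' x + p' x * pd i q' x
            - (pd i r' x * s' x + r' x * pd i s' x))) := by
  rw [pd_sub i (hf.fun_mul ((hp.fun_mul hq).fun_sub (hr.fun_mul hs))) (hg.fun_mul ((hp'.fun_mul hq').fun_sub (hr'.fun_mul hs'))),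
    pd_mul i hf ((hp.fun_mul hq).fun_sub (hr.fun_mul hs)), pd_mul i hg ((hp'.fun_mul hq').fun_sub (hr'.fun_mul hs')),
    pdq i hp hq hr hs, pdq i hp' hq' hr' hs']

set_option maxHeartbeats 2000000 in
/-- Pointwise identity for `w = ∇χ × ∇π`:
`w × curl w = (div[∇π × (∇χ × ∇π)])·∇χ + (div[∇χ × (∇π × ∇χ)])·∇π`. -/
theorem stmt15 (Ω : Set V3) (hΩ : IsOpen Ω)
    (χ π : V3 → ℝ) (hχ : ContDiffOn ℝ (⊤ : ℕ∞) χ Ω) (hπ : ContDiffOn ℝ (⊤ : ℕ∞) π Ω)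
    (w : V3 → V3) (hw : w = fun y => cross3 (grad χ y) (grad π y)) :
    ∀ x ∈ Ω,
      cross3 (w x) (vcurl w x) =
        (vdiv (fun z => cross3 (grad π z) (cross3 (grad χ z) (grad π z))) x) • grad χ x +
        (vdiv (fun z => cross3 (grad χ z) (cross3 (grad π z) (grad χ z))) x) • grad π x := by
  subst hw
  intro x hx
  have hχx : ContDiffAt ℝ (⊤ : ℕ∞) χ x := hχ.contDiffAt (hΩ.mem_nhds hx)
  have hπx : ContDiffAt ℝ (⊤ : ℕ∞) π x := hπ.contDiffAt (hΩ.mem_nhds hx)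
  have hdχ : ∀ j : Fin 3, DifferentiableAt ℝ (pd j χ) x := fun j =>
    (pd_contDiffAt hχx j).differentiableAt (by simp)
  have hdπ : ∀ j : Fin 3, DifferentiableAt ℝ (pd j π) x := fun j =>
    (pd_contDiffAt hπx j).differentiableAt (by simp)
  funext i
  fin_cases i <;>
  · simp only [vdiv, vcurl, cross3, grad, Matrix.cons_val_zero, Matrix.cons_val_one,
      Matrix.head_cons, Matrix.cons_val_two, Matrix.tail_cons, Pi.add_apply, Pi.smul_apply,
      smul_eq_mul, Fin.isValue, Fin.zero_eta, Fin.mk_one, Fin.reduceFinMk]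
    simp only [
      pdc 0 (hdπ 1) (hdχ 0) (hdπ 1) (hdχ 1) (hdπ 0) (hdπ 2) (hdχ 2) (hdπ 0) (hdχ 0) (hdπ 2),
      pdc 1 (hdπ 2) (hdχ 1) (hdπ 2) (hdχ 2) (hdπ 1) (hdπ 0) (hdχ 0) (hdπ 1) (hdχ 1) (hdπ 0),
      pdc 2 (hdπ 0) (hdχ 2) (hdπ 0) (hdχ 0) (hdπ 2) (hdπ 1) (hdχ 1) (hdπ 2) (hdχ 2) (hdπ 1),
      pdc 0 (hdχ 1) (hdπ 0) (hdχ 1) (hdπ 1) (hdχ 0) (hdχ 2) (hdπ 2) (hdχ 0) (hdπ 0) (hdχ 2),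
      pdc 1 (hdχ 2) (hdπ 1) (hdχ 2) (hdπ 2) (hdχ 1) (hdχ 0) (hdπ 0) (hdχ 1) (hdπ 1) (hdχ 0),
      pdc 2 (hdχ 0) (hdπ 2) (hdχ 0) (hdπ 0) (hdχ 2) (hdχ 1) (hdπ 1) (hdχ 2) (hdπ 2) (hdχ 1),
      pdq 0 (hdχ 2) (hdπ 0) (hdχ 0) (hdπ 2),
      pdq 1 (hdχ 1) (hdπ 2) (hdχ 2) (hdπ 1),
      pdq 2 (hdχ 1) (hdπ 2) (hdχ 2) (hdπ 1),
      pdq 0 (hdχ 0) (hdπ 1) (hdχ 1) (hdπ 0),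
      pdq 1 (hdχ 0) (hdπ 1) (hdχ 1) (hdπ 0),
      pdq 2 (hdχ 2) (hdπ 0) (hdχ 0) (hdπ 2)]
    simp only [pd_comm hχx 1 0, pd_comm hχx 2 0, pd_comm hχx 2 1,
      pd_comm hπx 1 0, pd_comm hπx 2 0, pd_comm hπx 2 1]
    ring
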